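/- arXiv:2011.14849 — 5 statements merged into one kernel-verified Lean document; each statement's English description precedes it below -/
import Mathlib

section
/- Let G be the binary choice gadget: vertices a, b, c, d, e, α, β with edges aα, aβ, bc, cα, cβ, αd, βd, de, and suppose in a larger graph G' containing this gadget the only vertices with neighbors outside the gadget are α and β. Then every locating-dominating set S of G' satisfies: S ∩ {a, α, β} ≠ ∅, S ∩ {b, c} ≠ ∅, and S ∩ {d, e} ≠ ∅; consequently |S ∩ {a,b,c,d,e,α,β}| ≥ 3. -/
/-!
The pendant vertices `b` and `e`, and the vertex `a`, whose neighbours all lie in the gadget,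
must each be in `S` or have a neighbour in `S`. This puts an element of `S` in each of the
pairwise disjoint sets `{a, α, β}`, `{b, c}` and `{d, e}`.
-/

/-- A locating-dominating set of a simple graph. -/
def IsLocatingDominating {V : Type*} (G : SimpleGraph V) (D : Set V) : Prop :=
  (∀ v, v ∉ D → ∃ u ∈ D, G.Adj v u) ∧
  ∀ u v, u ∉ D → v ∉ D → u ≠ v →
    G.neighborSet u ∩ D ≠ G.neighborSet v ∩ D

theorem IsLocatingDominating.mem_or_exists_mem_neighborSet {V : Type*} {G : SimpleGraph V}
    {S : Set V} (hS : IsLocatingDominating G S) (v : V) :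
    v ∈ S ∨ ∃ u ∈ G.neighborSet v, u ∈ S := by
  by_cases hv : v ∈ S
  · exact .inl hv
  · obtain ⟨u, huS, hvu⟩ := hS.1 v hv
    exact .inr ⟨u, hvu, huS⟩

theorem binaryChoiceGadget_three_mem_general {V : Type*} (G : SimpleGraph V)
    (a b c d e α β : V)
    (hnodup : ([a, b, c, d, e, α, β] : List V).Nodup)
    (ha : G.neighborSet a = {α, β})
    (hb : G.neighborSet b = {c})
    (he : G.neighborSet e = {d})
    (S : Set V) (hS : IsLocatingDominating G S) :
    (a ∈ S ∨ α ∈ S ∨ β ∈ S) ∧ (b ∈ S ∨ c ∈ S) ∧ (d ∈ S ∨ e ∈ S) ∧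
      3 ≤ (S ∩ {a, b, c, d, e, α, β}).ncard := by
  have h₁ : a ∈ S ∨ α ∈ S ∨ β ∈ S := by
    simpa [ha] using hS.mem_or_exists_mem_neighborSet a
  have h₂ : b ∈ S ∨ c ∈ S := by
    simpa [hb] using hS.mem_or_exists_mem_neighborSet b
  have h₃ : d ∈ S ∨ e ∈ S := by
    simpa [he, or_comm] using hS.mem_or_exists_mem_neighborSet e
  refine ⟨h₁, h₂, h₃, (Set.two_lt_ncard_iff ((Set.toFinite _).inter_of_right S)).2 ?_⟩
  simp only [List.nodup_cons, List.mem_cons, List.not_mem_nil,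
    List.nodup_nil, not_or] at hnodup
  rcases h₁ with h₁ | h₁ | h₁ <;> rcases h₂ with h₂ | h₂ <;> rcases h₃ with h₃ | h₃ <;>
    exact ⟨_, _, _, ⟨h₁, by simp⟩, ⟨h₂, by simp⟩, ⟨h₃, by simp⟩, by tauto⟩

theorem binaryChoiceGadget_three_mem {V : Type*} (G : SimpleGraph V)
    (a b c d e α β : V)
    (hnodup : ([a, b, c, d, e, α, β] : List V).Nodup)
    (ha : G.neighborSet a = {α, β})
    (hb : G.neighborSet b = {c})
    (hc : G.neighborSet c = {b, α, β})
    (hd : G.neighborSet d = {α, β, e})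
    (he : G.neighborSet e = {d})
    (S : Set V) (hS : IsLocatingDominating G S) :
    (a ∈ S ∨ α ∈ S ∨ β ∈ S) ∧ (b ∈ S ∨ c ∈ S) ∧ (d ∈ S ∨ e ∈ S) ∧
      3 ≤ (S ∩ {a, b, c, d, e, α, β}).ncard :=
  binaryChoiceGadget_three_mem_general G a b c d e α β hnodup ha hb he S hS
end

section
/- Let Q and Q' be two disjoint cliques of size M ≥ 2 in a graph G, joined by a perfect matching, such that every vertex of Q' has no neighbor outside Q ∪ Q' except possibly one common vertex γ adjacent to all of Q ∪ Q' (i.e., all vertices of Q' have the same neighborhood outside Q ∪ Q'). If D is a locating-dominating set of G, then at most one edge of the perfect matching has both endpoints outside D; equivalently |D ∩ (Q ∪ Q')| ≥ M − 1. -/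
open Set

theorem IsLocatingDominating.eq_of_neighborSet_inter_eq {V : Type*} {G : SimpleGraph V}
    {D : Set V} (hD : IsLocatingDominating G D) {u v : V} (hu : u ∉ D) (hv : v ∉ D)
    (h : G.neighborSet u ∩ D = G.neighborSet v ∩ D) : u = v := by
  by_contra huv
  exact hD.2 u v hu hv huv h

section MatchedCliques

variable {V ι : Type*} {G : SimpleGraph V} {q q' : ι → V}

theorem neighborSet_diff_subset_of_matched
    (hQ' : ∀ i j, i ≠ j → G.Adj (q' i) (q' j))
    (hnomatch : ∀ i j, i ≠ j → ¬ G.Adj (q i) (q' j))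
    (hout : ∀ i j,
      {w | w ∉ range q ∪ range q' ∧ G.Adj (q' i) w} =
      {w | w ∉ range q ∪ range q' ∧ G.Adj (q' j) w})
    (i j : ι) :
    G.neighborSet (q' i) \ {q i, q' j} ⊆ G.neighborSet (q' j) := by
  rintro w ⟨hadj, hw⟩
  simp only [mem_insert_iff, mem_singleton_iff, not_or] at hw
  by_cases hQQ' : w ∈ range q ∪ range q'
  · rcases hQQ' with ⟨k, rfl⟩ | ⟨k, rfl⟩
    · exact absurd hadj.symm (hnomatch k i fun hki => hw.1 (hki ▸ rfl))
    · exact (hQ' k j fun hkj => hw.2 (hkj ▸ rfl)).symm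
  · have hw' : w ∈ {w | w ∉ range q ∪ range q' ∧ G.Adj (q' i) w} := ⟨hQQ', hadj⟩
    rw [hout i j] at hw'
    exact hw'.2

theorem neighborSet_inter_subset_of_matched {D : Set V}
    (hQ' : ∀ i j, i ≠ j → G.Adj (q' i) (q' j))
    (hnomatch : ∀ i j, i ≠ j → ¬ G.Adj (q i) (q' j))
    (hout : ∀ i j,
      {w | w ∉ range q ∪ range q' ∧ G.Adj (q' i) w} =
      {w | w ∉ range q ∪ range q' ∧ G.Adj (q' j) w})
    {i j : ι} (hqi : q i ∉ D) (hq'j : q' j ∉ D) :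
    G.neighborSet (q' i) ∩ D ⊆ G.neighborSet (q' j) ∩ D := by
  rintro w ⟨hadj, hwD⟩
  refine ⟨neighborSet_diff_subset_of_matched hQ' hnomatch hout i j ⟨hadj, ?_⟩, hwD⟩
  rintro (rfl | rfl) <;> contradiction

end MatchedCliques

theorem ncard_setOf_mem_or_mem_le {ι α : Type*} [Finite ι] {q q' : ι → α}
    (hinj : Function.Injective q) (hinj' : Function.Injective q')
    (hdisj : Disjoint (range q) (range q')) (D : Set α) :
    {i | q i ∈ D ∨ q' i ∈ D}.ncard ≤ (D ∩ (range q ∪ range q')).ncard := by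
  have hunion : D ∩ (range q ∪ range q') = q '' (q ⁻¹' D) ∪ q' '' (q' ⁻¹' D) := by
    rw [image_preimage_eq_inter_range, image_preimage_eq_inter_range, inter_union_distrib_left]
  have hdisj' : Disjoint (q '' (q ⁻¹' D)) (q' '' (q' ⁻¹' D)) :=
    hdisj.mono (image_subset_range _ _) (image_subset_range _ _)
  calc {i | q i ∈ D ∨ q' i ∈ D}.ncard
      ≤ (q ⁻¹' D).ncard + (q' ⁻¹' D).ncard := ncard_union_le _ _
    _ = (q '' (q ⁻¹' D)).ncard + (q' '' (q' ⁻¹' D)).ncard := by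
      rw [ncard_image_of_injective _ hinj, ncard_image_of_injective _ hinj']
    _ = (D ∩ (range q ∪ range q')).ncard := by
      rw [hunion, ncard_union_eq hdisj' ((toFinite _).image _) ((toFinite _).image _)]

theorem matched_cliques_intersection_general {V : Type*}
    (G : SimpleGraph V) (M : ℕ)
    (q q' : Fin M → V)
    (hinj : Function.Injective q) (hinj' : Function.Injective q')
    (hdisj : Disjoint (Set.range q) (Set.range q'))
    (hQ' : ∀ i j, i ≠ j → G.Adj (q' i) (q' j))
    (hnomatch : ∀ i j, i ≠ j → ¬ G.Adj (q i) (q' j))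
    (hout : ∀ i j,
      {w | w ∉ Set.range q ∪ Set.range q' ∧ G.Adj (q' i) w} =
      {w | w ∉ Set.range q ∪ Set.range q' ∧ G.Adj (q' j) w})
    (D : Set V) (hD : IsLocatingDominating G D) :
    ({i : Fin M | q i ∉ D ∧ q' i ∉ D}).ncard ≤ 1 ∧
      M - 1 ≤ (D ∩ (Set.range q ∪ Set.range q')).ncard := by
  have hunmatched : {i : Fin M | q i ∉ D ∧ q' i ∉ D}.Subsingleton := by
    rintro i ⟨hqi, hq'i⟩ j ⟨hqj, hq'j⟩
    refine hinj' (hD.eq_of_neighborSet_inter_eq hq'i hq'j ?_)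
    exact (neighborSet_inter_subset_of_matched hQ' hnomatch hout hqi hq'j).antisymm
      (neighborSet_inter_subset_of_matched hQ' hnomatch hout hqj hq'i)
  have hle : {i : Fin M | q i ∉ D ∧ q' i ∉ D}.ncard ≤ 1 :=
    ncard_le_one_iff_subsingleton.2 hunmatched
  have hcompl : {i : Fin M | q i ∉ D ∧ q' i ∉ D}ᶜ = {i | q i ∈ D ∨ q' i ∈ D} := by
    ext i
    simp only [mem_compl_iff, mem_ofPred_eq, not_and_or, not_not]
  have hcard := ncard_add_ncard_compl {i : Fin M | q i ∉ D ∧ q' i ∉ D}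
  rw [hcompl, Nat.card_eq_fintype_card, Fintype.card_fin] at hcard
  refine ⟨hle, le_trans ?_ (ncard_setOf_mem_or_mem_le hinj hinj' hdisj D)⟩
  omega

theorem matched_cliques_intersection {V : Type*} [Fintype V]
    (G : SimpleGraph V) (M : ℕ) (hM : 2 ≤ M)
    (q q' : Fin M → V)
    (hinj : Function.Injective q) (hinj' : Function.Injective q')
    (hdisj : Disjoint (Set.range q) (Set.range q'))
    (hQ : ∀ i j, i ≠ j → G.Adj (q i) (q j))
    (hQ' : ∀ i j, i ≠ j → G.Adj (q' i) (q' j))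
    (hmatch : ∀ i, G.Adj (q i) (q' i))
    (hnomatch : ∀ i j, i ≠ j → ¬ G.Adj (q i) (q' j))
    (hout : ∀ i j,
      {w | w ∉ Set.range q ∪ Set.range q' ∧ G.Adj (q' i) w} =
      {w | w ∉ Set.range q ∪ Set.range q' ∧ G.Adj (q' j) w})
    (D : Set V) (hD : IsLocatingDominating G D) :
    ({i : Fin M | q i ∉ D ∧ q' i ∉ D}).ncard ≤ 1 ∧
      M - 1 ≤ (D ∩ (Set.range q ∪ Set.range q')).ncard :=
  matched_cliques_intersection_general G M q q' hinj hinj' hdisj hQ' hnomatch hout D hD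
end

section
/- Let T be a subtree of a connected graph G with ℓ leaves (where ℓ ≥ 2), and suppose T does not span G. Then G has a spanning tree with at least ℓ leaves. -/
/-!
Grow `T` one vertex at a time. While `T` does not span `G`, connectivity gives an edge `vw` with
`v` in `T` and `w` outside; attaching `w` as a pendant vertex adds one vertex and one edge, so the
result is again a tree, and its leaves contain those of `T` except possibly `v`, together with `w`.
-/

namespace SimpleGraph.Subgraph

variable {V : Type*} {G : SimpleGraph V}

lemma ncard_coe_neighborSet (H : G.Subgraph) (v : H.verts) :
    (H.coe.neighborSet v).ncard = (H.neighborSet v).ncard :=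
  Nat.card_congr (H.coeNeighborSetEquiv v)

lemma ncard_coe_edgeSet (H : G.Subgraph) : H.coe.edgeSet.ncard = H.edgeSet.ncard := by
  rw [← H.image_coe_edgeSet_coe,
    Set.ncard_image_of_injective _ (Sym2.map.injective Subtype.val_injective)]

def leaves (H : G.Subgraph) : Set V := {v | (H.neighborSet v).ncard = 1}

lemma leaves_subset_verts (H : G.Subgraph) : H.leaves ⊆ H.verts := fun v hv ↦
  have ⟨_, hw⟩ := (H.neighborSet v).nonempty_of_ncard_ne_zero (by rw [hv]; exact one_ne_zero)
  H.edge_vert hw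

lemma ncard_coe_leaves (H : G.Subgraph) :
    {v : H.verts | (H.coe.neighborSet v).ncard = 1}.ncard = H.leaves.ncard := by
  simp_rw [ncard_coe_neighborSet]
  exact Set.ncard_preimage_of_injective_subset_range Subtype.val_injective
    (Subtype.range_val (s := H.verts) ▸ H.leaves_subset_verts)

lemma isTree_coe_iff [Finite V] {H : G.Subgraph} :
    H.coe.IsTree ↔ H.Connected ∧ H.edgeSet.ncard + 1 = H.verts.ncard := by
  rw [isTree_iff_connected_and_card, ← Subgraph.connected_iff', Nat.card_coe_set_eq,
    ncard_coe_edgeSet, Nat.card_coe_set_eq]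

section Pendant

variable {H : G.Subgraph} {v w : V} (hvw : G.Adj v w)

lemma verts_sup_subgraphOfAdj (hv : v ∈ H.verts) :
    (H ⊔ G.subgraphOfAdj hvw).verts = insert w H.verts := by
  rw [verts_sup, subgraphOfAdj_verts, Set.union_insert, Set.union_singleton,
    Set.insert_eq_of_mem (Set.mem_insert_of_mem w hv)]

lemma edgeSet_sup_subgraphOfAdj :
    (H ⊔ G.subgraphOfAdj hvw).edgeSet = insert s(v, w) H.edgeSet := by
  rw [edgeSet_sup, edgeSet_subgraphOfAdj, Set.union_singleton]

lemma isTree_coe_sup_subgraphOfAdj [Finite V] (hH : H.coe.IsTree) (hv : v ∈ H.verts)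
    (hw : w ∉ H.verts) : (H ⊔ G.subgraphOfAdj hvw).coe.IsTree := by
  obtain ⟨hconn, hcard⟩ := isTree_coe_iff.mp hH
  have hvw_notMem : s(v, w) ∉ H.edgeSet := fun h ↦ hw (H.edge_vert (H.mem_edgeSet.mp h).symm)
  refine isTree_coe_iff.mpr ⟨connected_sup hconn.preconnected
    (subgraphOfAdj_connected hvw).preconnected ⟨v, hv, by simp⟩, ?_⟩
  rw [edgeSet_sup_subgraphOfAdj, verts_sup_subgraphOfAdj hvw hv, Set.ncard_insert_of_notMem hw,
    Set.ncard_insert_of_notMem hvw_notMem, hcard]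

lemma insert_leaves_sdiff_subset_leaves_sup_subgraphOfAdj (hw : w ∉ H.verts) :
    insert w (H.leaves \ {v}) ⊆ (H ⊔ G.subgraphOfAdj hvw).leaves := by
  rintro x (rfl | ⟨hx, hxv⟩)
  · have hH : H.neighborSet x = ∅ :=
      Set.eq_empty_of_forall_notMem fun _ hu ↦ hw (H.edge_vert hu)
    simp [leaves, neighborSet_sup, hH]
  · have hxw : x ≠ w := fun h ↦ hw (h ▸ H.leaves_subset_verts hx)
    rwa [leaves, Set.mem_ofPred_eq, neighborSet_sup,
      neighborSet_subgraphOfAdj_of_ne_of_ne hvw hxv hxw, Set.union_empty]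

lemma ncard_leaves_le_sup_subgraphOfAdj [Finite V] (hw : w ∉ H.verts) :
    H.leaves.ncard ≤ (H ⊔ G.subgraphOfAdj hvw).leaves.ncard := by
  have hw' : w ∉ H.leaves \ {v} := fun h ↦ hw (H.leaves_subset_verts h.1)
  calc H.leaves.ncard ≤ (H.leaves \ {v}).ncard + 1 := by
        have := H.leaves.pred_ncard_le_ncard_sdiff_singleton v; omega
    _ = (insert w (H.leaves \ {v})).ncard := (Set.ncard_insert_of_notMem hw').symm
    _ ≤ _ := Set.ncard_le_ncard (insert_leaves_sdiff_subset_leaves_sup_subgraphOfAdj hvw hw)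

end Pendant

end SimpleGraph.Subgraph

namespace SimpleGraph

variable {V : Type*} {G : SimpleGraph V}

theorem Connected.exists_isSpanning_of_sup_subgraphOfAdj [Finite V] (hG : G.Connected)
    {P : G.Subgraph → Prop}
    (hP : ∀ H v w (hvw : G.Adj v w), v ∈ H.verts → w ∉ H.verts → P H →
      P (H ⊔ G.subgraphOfAdj hvw))
    {H : G.Subgraph} (hH : P H) (hne : H.verts.Nonempty) : ∃ H', P H' ∧ H'.IsSpanning := by
  induction hn : H.vertsᶜ.ncard using Nat.strong_induction_on generalizing H with
  | _ n ih =>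
    by_cases hsp : H.IsSpanning
    · exact ⟨H, hH, hsp⟩
    obtain ⟨a, ha⟩ := hne
    obtain ⟨b, hb⟩ := not_forall.mp hsp
    obtain ⟨⟨⟨v, w⟩, hvw⟩, -, hv, hw⟩ :=
      (hG.preconnected a b).some.exists_boundary_dart H.verts ha hb
    have hlt : (H ⊔ G.subgraphOfAdj hvw).vertsᶜ.ncard < n := by
      rw [← hn, Subgraph.verts_sup_subgraphOfAdj hvw hv]
      exact Set.ncard_lt_ncard (compl_lt_compl_iff_lt.mpr (Set.ssubset_insert hw))
    exact ih _ hlt (hP _ _ _ hvw hv hw hH) ⟨v, Or.inl hv⟩ rfl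

end SimpleGraph

open SimpleGraph Subgraph

theorem subtree_extends_to_spanning_tree_general {V : Type*} [Fintype V]
    (G : SimpleGraph V) (hG : G.Connected)
    (T : G.Subgraph) (hT : T.coe.IsTree)
    (ℓ : ℕ)
    (hleaves : ℓ ≤ {v : T.verts | (T.coe.neighborSet v).ncard = 1}.ncard) :
    ∃ T' : G.Subgraph, T'.coe.IsTree ∧ T'.IsSpanning ∧
      ℓ ≤ {v : T'.verts | (T'.coe.neighborSet v).ncard = 1}.ncard := by
  obtain ⟨T', ⟨hT', hℓ'⟩, hsp⟩ :=
    hG.exists_isSpanning_of_sup_subgraphOfAdj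
      (P := fun H ↦ H.coe.IsTree ∧ ℓ ≤ H.leaves.ncard)
      (fun _ _ _ hvw hv hw ⟨hH, hℓH⟩ ↦ ⟨isTree_coe_sup_subgraphOfAdj hvw hH hv hw,
        hℓH.trans (ncard_leaves_le_sup_subgraphOfAdj hvw hw)⟩)
      ⟨hT, T.ncard_coe_leaves ▸ hleaves⟩ (Set.nonempty_coe_sort.mp hT.connected.nonempty)
  exact ⟨T', hT', hsp, (ncard_coe_leaves T').symm ▸ hℓ'⟩

theorem subtree_extends_to_spanning_tree {V : Type*} [Fintype V]
    (G : SimpleGraph V) (hG : G.Connected)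
    (T : G.Subgraph) (hT : T.coe.IsTree)
    (ℓ : ℕ) (hℓ : 2 ≤ ℓ)
    (hleaves : ℓ ≤ {v : T.verts | (T.coe.neighborSet v).ncard = 1}.ncard)
    (hns : ¬ T.IsSpanning) :
    ∃ T' : G.Subgraph, T'.coe.IsTree ∧ T'.IsSpanning ∧
      ℓ ≤ {v : T'.verts | (T'.coe.neighborSet v).ncard = 1}.ncard :=
  subtree_extends_to_spanning_tree_general G hG T hT ℓ hleaves
end

section
/- Every locating-dominating set of the path Pₙ on n ≥ 2 vertices has size at least ⌈2n/5⌉. -/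
open Finset SimpleGraph

theorem SimpleGraph.sum_card_filter_adj_le_sum_degree {V : Type*} [Fintype V]
    (G : SimpleGraph V) [DecidableRel G.Adj] (s t : Finset V) :
    ∑ v ∈ s, #{w ∈ t | G.Adj v w} ≤ ∑ w ∈ t, G.degree w := by
  refine (sum_card_bipartiteAbove_eq_sum_card_bipartiteBelow G.Adj).trans_le ?_
  gcongr with w
  rw [← card_neighborFinset_eq_degree]
  refine card_le_card fun u hu => ?_
  rw [mem_neighborFinset]
  exact (mem_filter.1 hu).2.symm

theorem SimpleGraph.pathGraph_degree_le_two {n : ℕ} [DecidableRel (pathGraph n).Adj]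
    (v : Fin n) : (pathGraph n).degree v ≤ 2 := by
  rw [← card_neighborFinset_eq_degree]
  refine (card_le_card_of_injOn Fin.val (t := {v.val - 1, v.val + 1}) ?_
    Fin.val_injective.injOn).trans card_le_two
  intro w hw
  rw [mem_coe, mem_neighborFinset, pathGraph_adj] at hw
  simp only [coe_insert, coe_singleton, Set.mem_insert_iff, Set.mem_singleton_iff]
  omega

section LocatingDominating

variable {V : Type*} {G : SimpleGraph V} [DecidableRel G.Adj] {D : Finset V}

theorem IsLocatingDominating.filter_adj_nonempty (hD : IsLocatingDominating G D) {v : V}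
    (hv : v ∉ D) : {w ∈ D | G.Adj v w}.Nonempty := by
  obtain ⟨w, hw, hvw⟩ := hD.1 v hv
  exact ⟨w, mem_filter.2 ⟨hw, hvw⟩⟩

variable [Fintype V] [DecidableEq V]

theorem IsLocatingDominating.injOn_filter_adj (hD : IsLocatingDominating G D) :
    Set.InjOn (fun v => {w ∈ D | G.Adj v w}) ↑Dᶜ := by
  intro u hu v hv huv
  by_contra hne
  refine hD.2 u v (by simpa using hu) (by simpa using hv) hne ?_
  ext w
  simpa [and_comm] using congrArg (w ∈ ·) huv

theorem IsLocatingDominating.card_filter_card_filter_adj_eq_one_le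
    (hD : IsLocatingDominating G D) : #{v ∈ Dᶜ | #{w ∈ D | G.Adj v w} = 1} ≤ #D := by
  refine (card_le_card_of_injOn _ (t := D.image singleton) ?_
    (hD.injOn_filter_adj.mono ?_)).trans card_image_le
  · intro v hv
    obtain ⟨w, hw⟩ := card_eq_one.1 (mem_filter.1 hv).2
    have hw_mem : w ∈ {w ∈ D | G.Adj v w} := hw ▸ mem_singleton_self w
    exact mem_image.2 ⟨w, (mem_filter.1 hw_mem).1, hw.symm⟩
  · exact coe_subset.2 (filter_subset _ _)

theorem IsLocatingDominating.two_mul_card_le (hD : IsLocatingDominating G D) {Δ : ℕ}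
    (hΔ : ∀ v, G.degree v ≤ Δ) : 2 * Fintype.card V ≤ (Δ + 3) * #D := by
  have hpointwise : ∀ v ∈ Dᶜ,
      2 ≤ (if #{w ∈ D | G.Adj v w} = 1 then 1 else 0) + #{w ∈ D | G.Adj v w} := by
    intro v hv
    have := (hD.filter_adj_nonempty (mem_compl.1 hv)).card_pos
    split_ifs <;> omega
  have hsum : 2 * #Dᶜ ≤ #D + Δ * #D := calc
    2 * #Dᶜ ≤ ∑ v ∈ Dᶜ,
        ((if #{w ∈ D | G.Adj v w} = 1 then 1 else 0) + #{w ∈ D | G.Adj v w}) := by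
      rw [mul_comm, ← smul_eq_mul, ← sum_const]
      exact sum_le_sum hpointwise
    _ = #{v ∈ Dᶜ | #{w ∈ D | G.Adj v w} = 1} + ∑ v ∈ Dᶜ, #{w ∈ D | G.Adj v w} := by
      rw [sum_add_distrib, card_filter]
    _ ≤ #D + ∑ w ∈ D, G.degree w :=
      add_le_add hD.card_filter_card_filter_adj_eq_one_le
        (G.sum_card_filter_adj_le_sum_degree _ _)
    _ ≤ #D + Δ * #D := by
      grw [sum_le_card_nsmul D _ Δ fun w _ => hΔ w, smul_eq_mul, mul_comm]
  rw [← card_add_card_compl D]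
  linarith

end LocatingDominating

theorem path_locatingDominating_lower_bound_general {n : ℕ}
    (D : Set (Fin n))
    (hD : IsLocatingDominating (SimpleGraph.pathGraph n) D) :
    (2 * n + 4) / 5 ≤ D.ncard := by
  classical
  have hslater := (D.coe_toFinset ▸ hD).two_mul_card_le pathGraph_degree_le_two
  rw [Fintype.card_fin, ← Set.ncard_eq_toFinset_card'] at hslater
  omega

theorem path_locatingDominating_lower_bound {n : ℕ} (hn : 2 ≤ n)
    (D : Set (Fin n))
    (hD : IsLocatingDominating (SimpleGraph.pathGraph n) D) :
    (2 * n + 4) / 5 ≤ D.ncard :=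
  path_locatingDominating_lower_bound_general D hD
end

section
/- Let G be the cycle Cₙ on n ≥ 4 vertices. Then every locating-dominating set of Cₙ has size at least ⌈2n/5⌉. -/
open Finset SimpleGraph Fin.CommRing

theorem mul_card_le_card_mul_ncard_of_forall_le_card_filter_add {A ι : Type*} [AddGroup A]
    [Fintype A] (D : Set A) [DecidablePred (· ∈ D)] (W : Finset ι) (f : ι → A) {k : ℕ}
    (h : ∀ a, k ≤ #{w ∈ W | a + f w ∈ D}) :
    k * Fintype.card A ≤ #W * D.ncard := by
  have hshift : ∀ w ∈ W, #{a : A | a + f w ∈ D} = D.ncard := by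
    intro w _
    rw [← Set.ncard_coe_finset, ← Set.ncard_image_of_injective _ (add_left_injective (f w))]
    congr 1
    ext x
    simp
  calc k * Fintype.card A = ∑ _a : A, k := by simp [mul_comm]
    _ ≤ ∑ a : A, #{w ∈ W | a + f w ∈ D} := sum_le_sum fun a _ => h a
    _ = ∑ w ∈ W, #{a : A | a + f w ∈ D} := by
      simp only [card_eq_sum_ones, sum_filter]
      exact sum_comm
    _ = #W * D.ncard := by rw [sum_congr rfl hshift, sum_const, smul_eq_mul]

namespace IsLocatingDominating

variable {n : ℕ}

theorem sub_one_mem_or_add_one_mem_of_cycleGraph {D : Set (Fin (n + 2))}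
    (hD : IsLocatingDominating (cycleGraph (n + 2)) D) {v : Fin (n + 2)} (hv : v ∉ D) :
    v - 1 ∈ D ∨ v + 1 ∈ D := by
  obtain ⟨u, hu, hadj⟩ := hD.1 v hv
  rw [← mem_neighborSet, cycleGraph_neighborSet] at hadj
  rcases hadj with rfl | rfl <;> simp [hu]

theorem sub_two_mem_or_add_two_mem_of_cycleGraph {D : Set (Fin (n + 3))}
    (hD : IsLocatingDominating (cycleGraph (n + 3)) D) {v : Fin (n + 3)}
    (hl : v - 1 ∉ D) (hr : v + 1 ∉ D) : v - 2 ∈ D ∨ v + 2 ∈ D := by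
  by_contra! h
  have hne : v - 1 ≠ v + 1 := by
    intro heq
    have h2 : (2 : Fin (n + 3)) = 0 := by linear_combination heq.symm
    simp [Fin.ext_iff, Nat.mod_eq_of_lt (show 2 < n + 3 by omega)] at h2
  apply hD.2 _ _ hl hr hne
  rw [cycleGraph_neighborSet, cycleGraph_neighborSet, show v - 1 - 1 = v - 2 by ring,
    sub_add_cancel, add_sub_cancel_right, show v + 1 + 1 = v + 2 by ring]
  ext x
  simp only [Set.mem_inter_iff, Set.mem_insert_iff, Set.mem_singleton_iff]
  grind

theorem one_lt_card_filter_add_mem_of_cycleGraph {D : Set (Fin (n + 3))} [DecidablePred (· ∈ D)]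
    (hD : IsLocatingDominating (cycleGraph (n + 3)) D) (c : Fin (n + 3)) :
    1 < #((Icc (-2) 2).filter fun k : ℤ ↦ c + k ∈ D) := by
  suffices ∃ a b : ℤ, a ≠ b ∧ a ∈ Icc (-2) 2 ∧ b ∈ Icc (-2) 2 ∧ c + a ∈ D ∧ c + b ∈ D by
    obtain ⟨a, b, hab, ha, hb, haD, hbD⟩ := this
    exact one_lt_card.2 ⟨a, mem_filter.2 ⟨ha, haD⟩, b, mem_filter.2 ⟨hb, hbD⟩, hab⟩
  have dom {v : Fin (n + 3)} : v ∉ D → v - 1 ∈ D ∨ v + 1 ∈ D :=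
    sub_one_mem_or_add_one_mem_of_cycleGraph hD
  by_cases hc : c ∈ D
  · by_cases hl : c - 1 ∈ D
    · exact ⟨0, -1, by simp, by simp, by simp, by simpa using hc, by simpa [← sub_eq_add_neg]⟩
    by_cases hr : c + 1 ∈ D
    · exact ⟨0, 1, by simp, by simp, by simp, by simpa using hc, by simpa⟩
    rcases sub_two_mem_or_add_two_mem_of_cycleGraph hD hl hr with h | h
    · exact ⟨0, -2, by simp, by simp, by simp, by simpa using hc, by simpa [← sub_eq_add_neg]⟩
    · exact ⟨0, 2, by simp, by simp, by simp, by simpa using hc, by simpa⟩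
  rcases dom hc with hl | hr
  · by_cases hr : c + 1 ∈ D
    · exact ⟨-1, 1, by simp, by simp, by simp, by simpa [← sub_eq_add_neg], by simpa⟩
    have h2 : c + 2 ∈ D := by
      simpa [hc, show c + 1 + 1 = c + 2 by ring] using dom hr
    exact ⟨-1, 2, by simp, by simp, by simp, by simpa [← sub_eq_add_neg], by simpa⟩
  · by_cases hl : c - 1 ∈ D
    · exact ⟨-1, 1, by simp, by simp, by simp, by simpa [← sub_eq_add_neg], by simpa⟩
    have h2 : c - 2 ∈ D := by
      simpa [hc, show c - 1 - 1 = c - 2 by ring] using dom hl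
    exact ⟨-2, 1, by simp, by simp, by simp, by simpa [← sub_eq_add_neg], by simpa⟩

end IsLocatingDominating

theorem cycle_locatingDominating_lower_bound {n : ℕ} (hn : 4 ≤ n)
    (D : Set (Fin n))
    (hD : IsLocatingDominating (SimpleGraph.cycleGraph n) D) :
    (2 * n + 4) / 5 ≤ D.ncard := by
  classical
  obtain ⟨m, rfl⟩ : ∃ m, n = m + 3 := ⟨n - 3, by omega⟩
  have h := mul_card_le_card_mul_ncard_of_forall_le_card_filter_add D (Icc (-2) 2)
    (fun k : ℤ ↦ (k : Fin (m + 3))) hD.one_lt_card_filter_add_mem_of_cycleGraph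
  rw [Fintype.card_fin, show #(Icc (-2 : ℤ) 2) = 5 from rfl] at h
  omega
end
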